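/- arXiv:2106.10347 — 2 statements merged into one kernel-verified Lean document; each statement's English description precedes it below -/
import Mathlib

section
/- Let h > 0, v1 > 0, v2 > 0 satisfy h·v1 < 1 and h·v2 < 1, let β1 ∈ (0,1], c1 ≥ 0, λ0 ≥ 0, and 0 < x_low < x̄2, and assume the fill condition c1 + λ0 > h·v2·x̄2/β1. Define x1(0) = 0, x1(k+1) = x1(k) + c1 + λ0 − h·v1·x1(k), x2(0) = x_low, and x2(k+1) = x2(k) + h·(β1·v1·x1(k) − v2·x2(k)). Then there exists a natural number T_R such that x2(T_R) ≥ x̄2. -/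
/-!
The upstream density obeys a contracting affine recursion, so it converges to
`(c1 + λ0) / (h v1)`, and the inflow `β1 v1 x1` into cell 2 converges to
`β1 (c1 + λ0) / h`, which by the fill condition exceeds the outflow `v2 x̄2` that cell 2
can have below its threshold. Hence, as long as `x2 < x̄2`, from some time on `x2` grows
by a fixed positive amount per step, and it must cross `x̄2`.
-/

open Filter Topology

theorem tendsto_of_affine_recurrence {x : ℕ → ℝ} {r b : ℝ} (hr : |r| < 1)
    (hx : ∀ k, x (k + 1) = r * x k + b) :
    Tendsto x atTop (𝓝 (b / (1 - r))) := by
  have hr1 : 1 - r ≠ 0 := by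
    have := (abs_lt.1 hr).2
    linarith
  have hform : ∀ k, x k = b / (1 - r) + r ^ k * (x 0 - b / (1 - r)) := by
    intro k
    induction k with
    | zero => simp
    | succ k ih =>
      rw [hx k, ih]
      field_simp
      ring
  rw [funext hform]
  simpa using ((tendsto_pow_atTop_nhds_zero_of_abs_lt_one hr).mul_const
    (x 0 - b / (1 - r))).const_add (b / (1 - r))

theorem exists_le_of_eventually_add_le_succ {y : ℕ → ℝ} {c ε : ℝ} (hε : 0 < ε)
    (hstep : ∀ᶠ k in atTop, y k < c → y k + ε ≤ y (k + 1)) :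
    ∃ k, c ≤ y k := by
  by_contra! hlt
  obtain ⟨N, hN⟩ := eventually_atTop.1 hstep
  have hgrow : ∀ n : ℕ, y N + n * ε ≤ y (N + n) := by
    intro n
    induction n with
    | zero => simp
    | succ n ih =>
      have := hN (N + n) (Nat.le_add_right N n) (hlt _)
      push_cast
      rw [← add_assoc]
      linarith
  obtain ⟨n, hn⟩ := exists_nat_gt ((c - y N) / ε)
  rw [div_lt_iff₀ hε] at hn
  linarith [hgrow n, hlt (N + n)]

theorem recovery_reaches_congestion_threshold_general
    (h v1 v2 β1 c1 lam0 x_bar2 : ℝ) (x1 x2 : ℕ → ℝ)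
    (hh : 0 < h) (hv1 : 0 < v1) (hv2 : 0 < v2)
    (hCFL1 : h * v1 < 1)
    (hβ1 : 0 < β1)
    (hfill : c1 + lam0 > h * v2 * x_bar2 / β1)
    (hx1_rec : ∀ k, x1 (k + 1) = x1 k + c1 + lam0 - h * v1 * x1 k)
    (hx2_rec : ∀ k, x2 (k + 1) = x2 k + h * (β1 * v1 * x1 k - v2 * x2 k)) :
    ∃ T_R : ℕ, x2 T_R ≥ x_bar2 := by
  have hx1_lim : Tendsto x1 atTop (𝓝 ((c1 + lam0) / (h * v1))) := by
    have hr : |1 - h * v1| < 1 := abs_lt.2 ⟨by nlinarith, by nlinarith⟩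
    simpa using tendsto_of_affine_recurrence hr fun k => by rw [hx1_rec k]; ring
  set L := β1 * (c1 + lam0) / h - v2 * x_bar2 with hL_def
  have hL : 0 < L := by
    rw [gt_iff_lt, div_lt_iff₀ hβ1] at hfill
    rw [hL_def, sub_pos, lt_div_iff₀ hh]
    linarith
  have hinflow : Tendsto (fun k => β1 * v1 * x1 k - v2 * x_bar2) atTop (𝓝 L) := by
    have := (hx1_lim.const_mul (β1 * v1)).sub_const (v2 * x_bar2)
    convert this using 2
    rw [hL_def]
    field_simp
  refine exists_le_of_eventually_add_le_succ (ε := h * (L / 2)) (by positivity) ?_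
  filter_upwards [hinflow.eventually_const_lt (half_lt_self hL)] with k hk hx2k
  have hout : v2 * x2 k ≤ v2 * x_bar2 := mul_le_mul_of_nonneg_left hx2k.le hv2.le
  rw [hx2_rec k]
  gcongr
  linarith

/-- Under the CFL conditions h·v1 < 1 and h·v2 < 1 and the fill
condition c1 + λ0 > h·v2·x̄2/β1, the worst-case recovery dynamics started at
x1(0) = 0, x2(0) = x_low reach x2(T_R) ≥ x̄2 in finitely many timesteps. -/
theorem recovery_reaches_congestion_threshold
    (h v1 v2 β1 c1 lam0 x_low x_bar2 : ℝ) (x1 x2 : ℕ → ℝ)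
    (hh : 0 < h) (hv1 : 0 < v1) (hv2 : 0 < v2)
    (hCFL1 : h * v1 < 1) (hCFL2 : h * v2 < 1)
    (hβ1 : 0 < β1) (hβ1' : β1 ≤ 1)
    (hc1 : 0 ≤ c1) (hlam0 : 0 ≤ lam0)
    (hx_low : 0 < x_low) (hx_bar2 : x_low < x_bar2)
    (hfill : c1 + lam0 > h * v2 * x_bar2 / β1)
    (hx1_0 : x1 0 = 0)
    (hx1_rec : ∀ k, x1 (k + 1) = x1 k + c1 + lam0 - h * v1 * x1 k)
    (hx2_0 : x2 0 = x_low)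
    (hx2_rec : ∀ k, x2 (k + 1) = x2 k + h * (β1 * v1 * x1 k - v2 * x2 k)) :
    ∃ T_R : ℕ, x2 T_R ≥ x_bar2 :=
  recovery_reaches_congestion_threshold_general h v1 v2 β1 c1 lam0 x_bar2 x1 x2 hh hv1 hv2 hCFL1 hβ1
    hfill hx1_rec hx2_rec
end

section
/- Let E_hyst, E_convex, Ē_d, Ē_r be real numbers with E_hyst > E_convex, Ē_d ≥ 0, Ē_r ≥ 0, let T_D, T_R be natural numbers with N = (T_D + T_R)·E_convex − (T_D·Ē_d + T_R·Ē_r) ≥ 0, and set T_S = ⌈N/(E_hyst − E_convex)⌉. Let e : ℕ → ℝ be a sequence satisfying (i) the sum of e(k) for k < T_D is at least T_D·Ē_d, (ii) the sum of e(k) for T_D ≤ k < T_D + T_R is at least T_R·Ē_r, and (iii) e(k) ≥ E_hyst for all k ≥ T_D + T_R. Then for every natural number T ≥ T_D + T_R + T_S, the sum of e(k) over k < T is at least T·E_convex. -/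
/-! After the first `T_D + T_R` steps the cumulative exits are at least `T_D·Ē_d + T_R·Ē_r`,
which falls short of the convex benchmark `(T_D + T_R)·E_convex` by `N`. Every later step beats
the benchmark by at least `E_hyst − E_convex > 0`, so `⌈N / (E_hyst − E_convex)⌉` further steps
make up the deficit. -/

theorem Finset.sum_range_add_mul_le_sum_range {e : ℕ → ℝ} {c : ℝ} (m n : ℕ)
    (he : ∀ k, m ≤ k → c ≤ e k) :
    ∑ k ∈ Finset.range m, e k + n * c ≤ ∑ k ∈ Finset.range (m + n), e k := by
  rw [Finset.sum_range_add]
  gcongr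
  simpa using Finset.card_nsmul_le_sum (Finset.range n) (fun k ↦ e (m + k)) c
    fun k _ ↦ he (m + k) (Nat.le_add_right m k)

theorem le_mul_of_natCeil_div_le {a d : ℝ} {n : ℕ} (hd : 0 < d) (h : ⌈a / d⌉₊ ≤ n) :
    a ≤ n * d :=
  (div_le_iff₀ hd).1 (Nat.ceil_le.1 h)

theorem cumulative_exits_beat_convex_general
    (E_hyst E_convex E_d_bar E_r_bar N : ℝ) (T_D T_R : ℕ) (e : ℕ → ℝ)
    (hE : E_hyst > E_convex)
    (hN : N = ((T_D : ℝ) + (T_R : ℝ)) * E_convex -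
      ((T_D : ℝ) * E_d_bar + (T_R : ℝ) * E_r_bar))
    (hdecon : ∑ k ∈ Finset.range T_D, e k ≥ (T_D : ℝ) * E_d_bar)
    (hrecov : ∑ k ∈ Finset.Ico T_D (T_D + T_R), e k ≥ (T_R : ℝ) * E_r_bar)
    (hsteady : ∀ k, T_D + T_R ≤ k → e k ≥ E_hyst) :
    ∀ T : ℕ, T_D + T_R + ⌈N / (E_hyst - E_convex)⌉₊ ≤ T →
      ∑ k ∈ Finset.range T, e k ≥ (T : ℝ) * E_convex := by
  intro T hT
  obtain ⟨n, rfl⟩ : ∃ n, T = T_D + T_R + n := ⟨T - (T_D + T_R), by omega⟩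
  have hdeficit : N ≤ n * (E_hyst - E_convex) :=
    le_mul_of_natCeil_div_le (sub_pos.2 hE) (by omega)
  have htransient := Finset.sum_range_add_sum_Ico e (Nat.le_add_right T_D T_R)
  have hsteady_sum := Finset.sum_range_add_mul_le_sum_range (T_D + T_R) n hsteady
  push_cast
  linarith

/-- If the exits sequence e satisfies the average lower bounds
during decongestion (first T_D steps) and recovery (next T_R steps), and
e(k) ≥ E_hyst thereafter, then for every T ≥ T_D + T_R + T_S the cumulative
exits over T steps are at least T·E_convex, where
T_S = ⌈((T_D + T_R)·E_convex − (T_D·Ē_d + T_R·Ē_r))/(E_hyst − E_convex)⌉. -/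
theorem cumulative_exits_beat_convex
    (E_hyst E_convex E_d_bar E_r_bar N : ℝ) (T_D T_R : ℕ) (e : ℕ → ℝ)
    (hE : E_hyst > E_convex) (hEd : 0 ≤ E_d_bar) (hEr : 0 ≤ E_r_bar)
    (hN : N = ((T_D : ℝ) + (T_R : ℝ)) * E_convex -
      ((T_D : ℝ) * E_d_bar + (T_R : ℝ) * E_r_bar))
    (hN0 : 0 ≤ N)
    (hdecon : ∑ k ∈ Finset.range T_D, e k ≥ (T_D : ℝ) * E_d_bar)
    (hrecov : ∑ k ∈ Finset.Ico T_D (T_D + T_R), e k ≥ (T_R : ℝ) * E_r_bar)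
    (hsteady : ∀ k, T_D + T_R ≤ k → e k ≥ E_hyst) :
    ∀ T : ℕ, T_D + T_R + ⌈N / (E_hyst - E_convex)⌉₊ ≤ T →
      ∑ k ∈ Finset.range T, e k ≥ (T : ℝ) * E_convex :=
  cumulative_exits_beat_convex_general E_hyst E_convex E_d_bar E_r_bar N T_D T_R e hE hN hdecon
    hrecov hsteady
end
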